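/- Let J be a non-zero saturated strongly stable ideal in S and m a positive integer. If I is a non-saturated ideal in the marked family Mf(J_{≥m}), then sat(I) = m and I = (I^sat)_{≥m}. -/

import Mathlib

open MvPolynomial

namespace Paper

/-- Monomials (exponent vectors) in `N` variables. -/
abbrev Mon (N : ℕ) := Fin N →₀ ℕ

variable {N : ℕ}

/-- Total degree of a monomial. -/
def mdeg (u : Mon N) : ℕ := u.sum fun _ e => e

/-- `BorelStep a b` : `b` is obtained from `a` by one increasing elementary move,
i.e. `x^a · x_j = x^b · x_i` with `i < j`. -/
def BorelStep (a b : Mon N) : Prop :=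
  ∃ i j : Fin N, i < j ∧ a + Finsupp.single j 1 = b + Finsupp.single i 1

/-- `BorelLt a b` : `a <_B b`, i.e. `b` is obtained from `a` by a nonempty
sequence of increasing elementary moves. -/
def BorelLt (a b : Mon N) : Prop := Relation.TransGen BorelStep a b

/-- A (combinatorially encoded) monomial ideal: a set of monomials closed
under multiplication by monomials. -/
def MonIdeal (J : Set (Mon N)) : Prop := ∀ u ∈ J, ∀ d : Mon N, u + d ∈ J

/-- A strongly stable monomial ideal. -/
def StronglyStable (J : Set (Mon N)) : Prop :=
  MonIdeal J ∧ ∀ b ∈ J, ∀ a, BorelLt b a → a ∈ J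

/-- The minimal monomial basis `B_J` of a monomial ideal. -/
def MinBasis (J : Set (Mon N)) : Set (Mon N) :=
  {u | u ∈ J ∧ ∀ v ∈ J, v ≤ u → v = u}

/-- `min(x^a) ≥ max(x^h)`. -/
def StarCond (a h : Mon N) : Prop :=
  ∀ i j : Fin N, a i ≠ 0 → h j ≠ 0 → j ≤ i


variable (K : Type) [Field K]

/-- The monomial `x^u` as a polynomial. -/
noncomputable def mono {N : ℕ} (u : Mon N) : MvPolynomial (Fin N) K :=
  MvPolynomial.monomial u (1 : K)

/-- The (actual) monomial ideal of `S` spanned by a set of monomials. -/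
noncomputable def idealOf {N : ℕ} (J : Set (Mon N)) : Ideal (MvPolynomial (Fin N) K) :=
  Ideal.span (mono K '' J)

/-- The irrelevant maximal ideal `(x_0, …, x_n)`. -/
noncomputable def irrel (N : ℕ) : Ideal (MvPolynomial (Fin N) K) :=
  Ideal.span (Set.range MvPolynomial.X)

/-- The saturation `I^sat = ⋃_j (I : (x_0,…,x_n)^j)`. -/
noncomputable def satIdeal {N : ℕ} (I : Ideal (MvPolynomial (Fin N) K)) :
    Ideal (MvPolynomial (Fin N) K) :=
  ⨆ k : ℕ, Submodule.colon I ((irrel K N ^ k : Ideal (MvPolynomial (Fin N) K)) : Set (MvPolynomial (Fin N) K))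

/-- The satiety of a homogeneous ideal: the smallest `m` such that
`I_t = (I^sat)_t` for all `t ≥ m`. -/
noncomputable def satiety {N : ℕ} (I : Ideal (MvPolynomial (Fin N) K)) : ℕ :=
  sInf {m | ∀ t, m ≤ t → ∀ p : MvPolynomial (Fin N) K,
    p.IsHomogeneous t → (p ∈ I ↔ p ∈ satIdeal K I)}

/-- The saturation of a combinatorial monomial ideal. -/
def msat {N : ℕ} (J : Set (Mon N)) : Set (Mon N) :=
  {u | ∃ k : ℕ, ∀ d : Mon N, mdeg d = k → u + d ∈ J}

/-- The satiety of a combinatorial monomial ideal. -/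
noncomputable def msatiety {N : ℕ} (J : Set (Mon N)) : ℕ :=
  sInf {m | ∀ u : Mon N, m ≤ mdeg u → (u ∈ J ↔ u ∈ msat J)}

/-- `I ∈ Mf(J)`: `I` is homogeneous and the monomials outside `J` form a
`K`-vector-space basis of `S/I`. -/
def MemMf {N : ℕ} (J : Set (Mon N)) (I : Ideal (MvPolynomial (Fin N) K)) : Prop :=
  (∀ p ∈ I, ∀ d : ℕ, MvPolynomial.homogeneousComponent d p ∈ I) ∧
  LinearIndependent K
    (fun u : {u : Mon N // u ∉ J} => Ideal.Quotient.mk I (mono K u.1)) ∧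
  ⊤ ≤ Submodule.span K
    (Set.range fun u : {u : Mon N // u ∉ J} => Ideal.Quotient.mk I (mono K u.1))

/-- The truncation `J_{≥ m}` of a monomial ideal. -/
def trunc {N : ℕ} (J : Set (Mon N)) (m : ℕ) : Set (Mon N) :=
  {u | u ∈ J ∧ m ≤ mdeg u}


theorem mdeg_eq_degree (u : Mon N) : mdeg u = u.degree := rfl

section

open Relation

theorem BorelStep.add_right {a b : Mon N} (h : BorelStep a b) (u : Mon N) :
    BorelStep (a + u) (b + u) := by
  obtain ⟨i, j, hij, hab⟩ := h
  exact ⟨i, j, hij, by rw [add_right_comm, hab, add_right_comm]⟩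

theorem reflTransGen_borelStep_add {a b c d : Mon N} (hab : ReflTransGen BorelStep a b)
    (hcd : ReflTransGen BorelStep c d) : ReflTransGen BorelStep (a + c) (b + d) := by
  refine (hab.lift (· + c) fun _ _ h => h.add_right c).trans ?_
  simp only [add_comm b]
  exact hcd.lift (· + b) fun _ _ h => h.add_right b

theorem reflTransGen_borelStep_single_zero {n : ℕ} (i : Fin (n + 1)) :
    ∀ k, ReflTransGen BorelStep (Finsupp.single 0 k) (Finsupp.single i k)
  | 0 => by simp only [Finsupp.single_zero]; exact .refl
  | k + 1 => by
    rcases eq_or_ne i 0 with rfl | hi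
    · exact .refl
    simp only [Finsupp.single_add]
    refine reflTransGen_borelStep_add (reflTransGen_borelStep_single_zero i k) (.single ?_)
    exact ⟨0, i, Fin.pos_of_ne_zero hi, add_comm _ _⟩

theorem reflTransGen_borelStep_single_zero_mdeg {n : ℕ} (d : Mon (n + 1)) :
    ReflTransGen BorelStep (Finsupp.single 0 (mdeg d)) d := by
  induction d using Finsupp.induction with
  | zero => simp only [mdeg_eq_degree, map_zero, Finsupp.single_zero]; exact .refl
  | single_add i k d _ _ ih =>
    rw [mdeg_eq_degree, map_add, Finsupp.degree_single, Finsupp.single_add]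
    exact reflTransGen_borelStep_add (reflTransGen_borelStep_single_zero i k) ih

theorem StronglyStable.mem_of_reflTransGen {J : Set (Mon N)} (hJ : StronglyStable J)
    {a b : Mon N} (ha : a ∈ J) (hab : ReflTransGen BorelStep a b) : b ∈ J := by
  rcases reflTransGen_iff_eq_or_transGen.1 hab with rfl | hab
  exacts [ha, hJ.2 a ha b hab]

theorem StronglyStable.mem_of_single_zero_add_mem {n : ℕ} {J : Set (Mon (n + 1))}
    (hJ : StronglyStable J) (hsat : J = msat J) {u : Mon (n + 1)} {k : ℕ}
    (h : Finsupp.single 0 k + u ∈ J) : u ∈ J := by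
  rw [hsat]
  refine ⟨k, fun d hd => ?_⟩
  rw [add_comm u]
  exact hJ.mem_of_reflTransGen h
    (reflTransGen_borelStep_add (hd ▸ reflTransGen_borelStep_single_zero_mdeg d) .refl)

end

theorem _root_.Ideal.IsHomogeneous.colon {ι σ A : Type*} [DecidableEq ι] [AddRightCancelMonoid ι]
    [Semiring A] [SetLike σ A] [AddSubmonoidClass σ A] {𝒜 : ι → σ} [GradedRing 𝒜]
    {I L : Ideal A} (hI : I.IsHomogeneous 𝒜) (hL : L.IsHomogeneous 𝒜) :
    (I.colon (L : Set A)).IsHomogeneous 𝒜 := by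
  classical
  intro i p hp
  rw [Submodule.mem_colon] at hp ⊢
  intro q hq
  rw [← DirectSum.sum_support_decompose 𝒜 q, smul_eq_mul, Finset.mul_sum]
  refine I.sum_mem fun j _ => ?_
  rw [← DirectSum.coe_decompose_mul_add_of_right_mem 𝒜 (SetLike.coe_mem _)]
  exact hI _ (hp _ (hL j hq))

theorem _root_.Ideal.IsHomogeneous.pow {ι σ A : Type*} [DecidableEq ι] [AddMonoid ι]
    [CommSemiring A] [SetLike σ A] [AddSubmonoidClass σ A] {𝒜 : ι → σ} [GradedRing 𝒜]
    {I : Ideal A} (hI : I.IsHomogeneous 𝒜) : ∀ k : ℕ, (I ^ k).IsHomogeneous 𝒜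
  | 0 => by simpa only [pow_zero, Ideal.one_eq_top] using Ideal.IsHomogeneous.top 𝒜
  | k + 1 => by simpa only [pow_succ] using (hI.pow k).mul hI

attribute [local instance] MvPolynomial.gradedAlgebra

variable {K}

theorem exists_mem_support_of_mem_support_X_pow_mul {σ : Type*} {i : σ} {k : ℕ}
    {p : MvPolynomial σ K} {u : σ →₀ ℕ} (hu : u ∈ (X i ^ k * p).support) :
    ∃ v ∈ p.support, u = Finsupp.single i k + v := by
  classical
  rw [mem_support_iff, X_pow_eq_monomial, coeff_monomial_mul'] at hu
  split_ifs at hu with hle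
  · exact ⟨u - Finsupp.single i k, mem_support_iff.2 (by simpa using hu),
      (add_tsub_cancel_of_le hle).symm⟩
  · exact absurd rfl hu

theorem isHomogeneous_of_homogeneousComponent_mem {σ : Type*} {I : Ideal (MvPolynomial σ K)}
    (hI : ∀ p ∈ I, ∀ d, homogeneousComponent d p ∈ I) :
    I.IsHomogeneous (homogeneousSubmodule σ K) := fun d p hp => by
  convert hI p hp d using 1
  exact decomposition.decompose'_apply p d

theorem isHomogeneous_irrel : (irrel K N).IsHomogeneous (homogeneousSubmodule (Fin N) K) := by
  refine Ideal.homogeneous_span _ _ ?_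
  rintro _ ⟨i, rfl⟩
  exact ⟨1, isHomogeneous_X K i⟩

theorem isHomogeneous_satIdeal {I : Ideal (MvPolynomial (Fin N) K)}
    (hI : I.IsHomogeneous (homogeneousSubmodule (Fin N) K)) :
    (satIdeal K I).IsHomogeneous (homogeneousSubmodule (Fin N) K) :=
  Ideal.IsHomogeneous.iSup fun k => hI.colon (isHomogeneous_irrel.pow k)

theorem le_satIdeal (I : Ideal (MvPolynomial (Fin N) K)) : I ≤ satIdeal K I :=
  le_trans (fun _ hp => Submodule.mem_colon.2 fun q _ => I.mul_mem_right q hp)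
    (le_iSup (fun k => Submodule.colon I ↑(irrel K N ^ k)) 0)

theorem exists_X_pow_mul_mem_of_mem_satIdeal {I : Ideal (MvPolynomial (Fin N) K)}
    {p : MvPolynomial (Fin N) K} (hp : p ∈ satIdeal K I) (i : Fin N) :
    ∃ k, X i ^ k * p ∈ I := by
  have hdir : Directed (· ≤ ·) fun k => Submodule.colon I ↑(irrel K N ^ k) :=
    fun a b => ⟨max a b,
      Submodule.colon_mono le_rfl (Ideal.pow_le_pow_right (le_max_left a b)),
      Submodule.colon_mono le_rfl (Ideal.pow_le_pow_right (le_max_right a b))⟩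
  obtain ⟨k, hk⟩ := (Submodule.mem_iSup_of_directed _ hdir).1 hp
  refine ⟨k, mul_comm p _ ▸ Submodule.mem_colon.1 hk _ ?_⟩
  exact Ideal.pow_mem_pow (Ideal.subset_span (Set.mem_range_self i)) k

namespace MemMf

section

variable {T : Set (Mon N)} {I : Ideal (MvPolynomial (Fin N) K)}

theorem exists_sub_mem (hI : MemMf K T I) (f : MvPolynomial (Fin N) K) :
    ∃ r ∈ restrictSupport K Tᶜ, f - r ∈ I := by
  have hf := hI.2.2 (Submodule.mem_top (x := Ideal.Quotient.mk I f))
  have hrange : (Set.range fun u : {u : Mon N // u ∉ T} => Ideal.Quotient.mk I (mono K u.1)) =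
      (Ideal.Quotient.mkₐ K I).toLinearMap '' ((monomial · 1) '' Tᶜ) := by
    ext; simp [mono]
  rw [hrange, Submodule.span_image, ← restrictSupport_eq_span] at hf
  obtain ⟨r, hr, hrf⟩ := hf
  exact ⟨r, hr, Ideal.Quotient.eq.1 hrf.symm⟩

theorem eq_zero_of_mem_restrictSupport (hI : MemMf K T I) {f : MvPolynomial (Fin N) K}
    (hf : f ∈ I) (hfT : f ∈ restrictSupport K Tᶜ) : f = 0 := by
  classical
  rw [mem_restrictSupport_iff] at hfT
  have hsum : ∑ u ∈ f.support.subtype (· ∉ T),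
      coeff u.1 f • Ideal.Quotient.mk I (mono K u.1) = 0 := by
    rw [Finset.sum_subtype_eq_sum_filter (f := fun u => coeff u f • Ideal.Quotient.mk I (mono K u)),
      Finset.filter_true_of_mem (p := (· ∉ T)) fun _ hu => hfT hu]
    simp_rw [← Ideal.Quotient.mkₐ_eq_mk K, ← map_smul, ← map_sum, mono, smul_monomial, smul_eq_mul,
      mul_one, ← as_sum]
    exact Ideal.Quotient.eq_zero_iff_mem.2 hf
  have hcoeff := linearIndependent_iff'.1 hI.2.1 _ _ hsum
  ext u
  by_contra hu
  exact hu (hcoeff ⟨u, hfT (mem_support_iff.2 hu)⟩ (Finset.mem_subtype.2 (mem_support_iff.2 hu)))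

end

variable {n m : ℕ} {J : Set (Mon (n + 1))} {I : Ideal (MvPolynomial (Fin (n + 1)) K)}
  {f : MvPolynomial (Fin (n + 1)) K} {t : ℕ}

theorem eq_zero_of_isHomogeneous_of_lt (hI : MemMf K (trunc J m) I) (hf : f ∈ I)
    (hfh : f.IsHomogeneous t) (ht : t < m) : f = 0 :=
  hI.eq_zero_of_mem_restrictSupport hf fun u hu hut =>
    absurd hut.2 <| by
      rw [mdeg_eq_degree, Finsupp.degree_apply, ← hfh.degree_eq_sum_deg_support hu]; omega

theorem mem_of_X_zero_pow_mul_mem (hI : MemMf K (trunc J m) I) (hJ : StronglyStable J)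
    (hsat : J = msat J) (hfh : f.IsHomogeneous t) (ht : m ≤ t) {k : ℕ}
    (hk : X 0 ^ k * f ∈ I) : f ∈ I := by
  obtain ⟨r, hr, hfr⟩ := hI.exists_sub_mem f
  set r' := homogeneousComponent t r
  have hfr' : f - r' ∈ I := by
    simpa only [map_sub, homogeneousComponent_eq_self hfh] using hI.1 _ hfr t
  have hXr' : X 0 ^ k * r' ∈ I := by
    rw [show X 0 ^ k * r' = X 0 ^ k * f - X 0 ^ k * (f - r') by ring]
    exact sub_mem hk (I.mul_mem_left _ hfr')
  have hXr'0 : X 0 ^ k * r' = 0 := hI.eq_zero_of_mem_restrictSupport hXr' fun u hu hut => by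
    obtain ⟨v, hv, rfl⟩ := exists_mem_support_of_mem_support_X_pow_mul hu
    rw [support_homogeneousComponent, Finset.mem_filter] at hv
    exact hr hv.1 ⟨hJ.mem_of_single_zero_add_mem hsat hut.1, by rwa [mdeg_eq_degree, hv.2]⟩
  rw [(mul_eq_zero.1 hXr'0).resolve_left (pow_ne_zero _ (X_ne_zero _)), sub_zero] at hfr'
  exact hfr'

end MemMf

theorem markedFamily_trunc_satiety_general {n : ℕ} (K : Type) [Field K]
    (J : Set (Mon (n + 1))) (I : Ideal (MvPolynomial (Fin (n + 1)) K)) (m : ℕ)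
    (hss : StronglyStable J) (hsat : J = msat J)
    (hI : MemMf K (trunc J m) I) (hns : I ≠ satIdeal K I) :
    satiety K I = m ∧
    ∀ p : MvPolynomial (Fin (n + 1)) K,
      p ∈ I ↔ (p ∈ satIdeal K I ∧
        ∀ d, d < m → MvPolynomial.homogeneousComponent d p = 0) := by
  have hIh := isHomogeneous_of_homogeneousComponent_mem hI.1
  have hsath := isHomogeneous_satIdeal hIh
  have hagree : ∀ t, m ≤ t → ∀ p : MvPolynomial (Fin (n + 1)) K,
      p.IsHomogeneous t → (p ∈ I ↔ p ∈ satIdeal K I) := fun t ht p hp =>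
    ⟨(le_satIdeal I ·), fun hpsat => by
      obtain ⟨k, hk⟩ := exists_X_pow_mul_mem_of_mem_satIdeal hpsat 0
      exact hI.mem_of_X_zero_pow_mul_mem hss hsat hp ht hk⟩
  have hmem : ∀ p, p ∈ I ↔
      (p ∈ satIdeal K I ∧ ∀ d, d < m → homogeneousComponent d p = 0) := by
    refine fun p => ⟨fun hp => ⟨le_satIdeal I hp, fun d hd => hI.eq_zero_of_isHomogeneous_of_lt
      (homogeneousComponent_mem_of_mem hIh hp d) (homogeneousComponent_isHomogeneous d p) hd⟩,
      fun ⟨hp, hlow⟩ => (mem_iff_homogeneousComponent_mem hIh p).2 fun t => ?_⟩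
    rcases lt_or_ge t m with ht | ht
    · simp only [hlow t ht, zero_mem]
    · exact (hagree t ht _ (homogeneousComponent_isHomogeneous t p)).2
        (homogeneousComponent_mem_of_mem hsath hp t)
  refine ⟨le_antisymm (Nat.sInf_le hagree) (le_csInf ⟨m, hagree⟩ fun m' hm' => ?_), hmem⟩
  by_contra! hm'm
  refine hns (le_antisymm (le_satIdeal I) fun p hp => (hmem p).2 ⟨hp, fun t ht => ?_⟩)
  -- `x_0 ^ (m - 1 - t) * p_t` is a form of degree `m - 1 ≥ m'` in `I^sat`, so in `I`, so zero.
  have hform : (X 0 ^ (m - 1 - t) * homogeneousComponent t p).IsHomogeneous (m - 1) := by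
    simpa only [Nat.sub_add_cancel (by omega : t ≤ m - 1)] using
      (isHomogeneous_X_pow (R := K) (0 : Fin (n + 1)) (m - 1 - t)).mul
        (homogeneousComponent_isHomogeneous t p)
  have hzero := hI.eq_zero_of_isHomogeneous_of_lt ((hm' (m - 1) (by omega) _ hform).2
    (Ideal.mul_mem_left _ _ (homogeneousComponent_mem_of_mem hsath hp t))) hform (by omega)
  exact (mul_eq_zero.1 hzero).resolve_left (pow_ne_zero _ (X_ne_zero _))

/-- if `J` is a non-zero saturated strongly stable ideal and
`I ∈ Mf(J_{≥m})` is not saturated, then `sat I = m` and `I = (I^sat)_{≥m}`. -/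
theorem markedFamily_trunc_satiety {n : ℕ} (K : Type) [Field K]
    (J : Set (Mon (n + 1))) (I : Ideal (MvPolynomial (Fin (n + 1)) K)) (m : ℕ)
    (hne : J.Nonempty) (hss : StronglyStable J) (hsat : J = msat J) (hm : 0 < m)
    (hI : MemMf K (trunc J m) I) (hns : I ≠ satIdeal K I) :
    satiety K I = m ∧
    ∀ p : MvPolynomial (Fin (n + 1)) K,
      p ∈ I ↔ (p ∈ satIdeal K I ∧
        ∀ d, d < m → MvPolynomial.homogeneousComponent d p = 0) :=
  markedFamily_trunc_satiety_general K J I m hss hsat hI hns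

end Paper
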